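/- arXiv:0811.3830 — 4 statements merged into one kernel-verified Lean document; each statement's English description precedes it below -/
import Mathlib

section
/- Let K be a field, n a positive integer, and L, L' subgroups (lattices) of ℤ^n. Then L ⊆ L' if and only if the lattice ideal I_L is contained in the lattice ideal I_{L'} in K[x_1,…,x_n]. -/
open MvPolynomial

/-- A polynomial is `L`-homogeneous if the difference of any two exponent vectors
occurring in its support lies in `L`. -/
def IsLHomog {n : ℕ} {K : Type*} [CommSemiring K] (L : Set (Fin n → ℤ))
    (F : MvPolynomial (Fin n) K) : Prop :=
  ∀ u ∈ F.support, ∀ v ∈ F.support, (fun j => ((u j : ℤ) - (v j : ℤ))) ∈ L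

/-- An ideal is `L`-homogeneous if it is generated by `L`-homogeneous polynomials. -/
def IsLHomogIdeal {n : ℕ} {K : Type*} [CommSemiring K] (L : Set (Fin n → ℤ))
    (J : Ideal (MvPolynomial (Fin n) K)) : Prop :=
  ∃ S : Set (MvPolynomial (Fin n) K), (∀ F ∈ S, IsLHomog L F) ∧ J = Ideal.span S

/-- The positive part `u⁺` of an integer vector, as an exponent vector. -/
noncomputable def posPart {n : ℕ} (u : Fin n → ℤ) : Fin n →₀ ℕ :=
  Finsupp.equivFunOnFinite.symm (fun j => (u j).toNat)

/-- The lattice ideal `I_L = ⟨x^{u⁺} - x^{u⁻} : u ∈ L⟩`. -/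
noncomputable def latticeIdeal {n : ℕ} (K : Type*) [CommRing K] (L : AddSubgroup (Fin n → ℤ)) :
    Ideal (MvPolynomial (Fin n) K) :=
  Ideal.span {F | ∃ u ∈ L, F = monomial (posPart u) (1 : K) - monomial (posPart (-u)) (1 : K)}

/-- The saturation of a lattice `L ⊆ ℤⁿ`. -/
def satSet {n : ℕ} (L : AddSubgroup (Fin n → ℤ)) : Set (Fin n → ℤ) :=
  {α | ∃ d : ℤ, d ≠ 0 ∧ d • α ∈ L}

/-- The arithmetical rank of an ideal. -/
noncomputable def ara {R : Type*} [CommSemiring R] (J : Ideal R) : ℕ :=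
  sInf {s | ∃ F : Fin s → R, (∀ i, F i ∈ J) ∧ J.radical = (Ideal.span (Set.range F)).radical}

/-- The `L`-homogeneous arithmetical rank of an ideal. -/
noncomputable def araH {n : ℕ} {K : Type*} [CommSemiring K] (L : Set (Fin n → ℤ))
    (J : Ideal (MvPolynomial (Fin n) K)) : ℕ :=
  sInf {s | ∃ F : Fin s → MvPolynomial (Fin n) K, (∀ i, IsLHomog L (F i)) ∧
    J.radical = (Ideal.span (Set.range F)).radical}

/-!
The monomial map `K[x₁,…,xₙ] → K[ℤⁿ/L']`, `x^β ↦ t^{[β]}`, kills every generator of `I_{L'}`,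
while it sends the binomial `x^{u⁺} - x^{u⁻}` to `t^{[u⁺]} - t^{[u⁻]}`, which vanishes only when
`u = u⁺ - u⁻ ∈ L'`. So a generator of `I_L` lying in `I_{L'}` forces `u ∈ L'`.
-/

namespace LatticeIdeal

variable {n : ℕ}

-- `_root_` selects the exponent vector `u⁺ : Fin n →₀ ℕ`; plain `posPart` would also admit
-- Mathlib's lattice positive part `u⁺ : Fin n → ℤ`.
lemma posPart_sub_posPart_neg (u : Fin n → ℤ) :
    ((fun j => (_root_.posPart u j : ℤ)) - fun j => (_root_.posPart (-u) j : ℤ)) = u := by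
  funext j
  simp only [Pi.sub_apply, _root_.posPart, Finsupp.coe_equivFunOnFinite_symm, Pi.neg_apply]
  omega

lemma mk_posPart_eq_mk_posPart_neg_iff {L : AddSubgroup (Fin n → ℤ)} {u : Fin n → ℤ} :
    (QuotientAddGroup.mk (fun j => (_root_.posPart u j : ℤ)) : (Fin n → ℤ) ⧸ L) =
      QuotientAddGroup.mk (fun j => (_root_.posPart (-u) j : ℤ)) ↔ u ∈ L := by
  rw [QuotientAddGroup.eq_iff_sub_mem, posPart_sub_posPart_neg]

variable (K : Type*) [CommSemiring K] (L : AddSubgroup (Fin n → ℤ))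

noncomputable def quotientMap :
    MvPolynomial (Fin n) K →+* AddMonoidAlgebra K ((Fin n → ℤ) ⧸ L) :=
  AddMonoidAlgebra.mapDomainRingHom K
    ((QuotientAddGroup.mk' L).comp
      (((Nat.castAddMonoidHom ℤ).compLeft (Fin n)).comp Finsupp.coeFnAddHom))

lemma quotientMap_monomial (β : Fin n →₀ ℕ) (a : K) :
    quotientMap K L (monomial β a) =
      AddMonoidAlgebra.single (QuotientAddGroup.mk fun j => (β j : ℤ)) a := by
  simp only [quotientMap, ← single_eq_monomial, AddMonoidAlgebra.mapDomainRingHom_apply,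
    AddMonoidAlgebra.mapDomain_single]
  rfl

variable {K : Type*} [CommRing K] {L : AddSubgroup (Fin n → ℤ)}

lemma quotientMap_binomial_eq_zero_iff [Nontrivial K] (u : Fin n → ℤ) :
    quotientMap K L (monomial (_root_.posPart u) 1 - monomial (_root_.posPart (-u)) 1) = 0 ↔
      u ∈ L := by
  rw [map_sub, quotientMap_monomial, quotientMap_monomial, sub_eq_zero,
    AddMonoidAlgebra.single_left_inj one_ne_zero, mk_posPart_eq_mk_posPart_neg_iff]

lemma latticeIdeal_le_ker_quotientMap : latticeIdeal K L ≤ RingHom.ker (quotientMap K L) := by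
  rw [latticeIdeal, Ideal.span_le]
  rintro _ ⟨u, hu, rfl⟩
  rw [SetLike.mem_coe, RingHom.mem_ker, map_sub, quotientMap_monomial, quotientMap_monomial,
    mk_posPart_eq_mk_posPart_neg_iff.2 hu, sub_self]

lemma binomial_mem_latticeIdeal {u : Fin n → ℤ} (hu : u ∈ L) :
    monomial (_root_.posPart u) (1 : K) - monomial (_root_.posPart (-u)) 1 ∈ latticeIdeal K L :=
  Ideal.subset_span ⟨u, hu, rfl⟩

lemma latticeIdeal_mono {L' : AddSubgroup (Fin n → ℤ)} (h : L ≤ L') :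
    latticeIdeal K L ≤ latticeIdeal K L' :=
  Ideal.span_le.2 fun _ ⟨_, hu, hF⟩ => hF ▸ binomial_mem_latticeIdeal (h hu)

lemma mem_of_binomial_mem_latticeIdeal [Nontrivial K] {u : Fin n → ℤ}
    (hu : monomial (_root_.posPart u) (1 : K) - monomial (_root_.posPart (-u)) 1 ∈
      latticeIdeal K L) : u ∈ L :=
  (quotientMap_binomial_eq_zero_iff u).1 (latticeIdeal_le_ker_quotientMap hu)

end LatticeIdeal

open LatticeIdeal in
theorem stmt1_general {K : Type*} [Field K] {n : ℕ} (L L' : AddSubgroup (Fin n → ℤ)) :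
    L ≤ L' ↔ latticeIdeal K L ≤ latticeIdeal K L' :=
  ⟨latticeIdeal_mono, fun h _ hu =>
    mem_of_binomial_mem_latticeIdeal (h (binomial_mem_latticeIdeal hu))⟩

/-- `L ⊆ L'` iff the lattice ideal `I_L` is contained in `I_{L'}`. -/
theorem stmt1 {K : Type*} [Field K] {n : ℕ} (hn : 0 < n) (L L' : AddSubgroup (Fin n → ℤ)) :
    L ≤ L' ↔ latticeIdeal K L ≤ latticeIdeal K L' :=
  stmt1_general L L'
end

section
/- Let K be a field, n a positive integer, and L a subgroup (lattice) of ℤ^n. For every u ∈ ℤ^n, the binomial x^{u⁺} − x^{u⁻} belongs to the lattice ideal I_L if and only if u ∈ L. -/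
open MvPolynomial

/-!
The `K`-algebra map `K[x₁, …, xₙ] → K[ℤⁿ ⧸ L]`, `x^β ↦ [β]`, kills every generator of `I_L`, so
it kills `x^{u⁺} - x^{u⁻}` whenever that binomial lies in `I_L`; but it sends the binomial to
`[u⁺] - [u⁻]`, which vanishes only if `u = u⁺ - u⁻ ∈ L`.
-/

section

variable {n : ℕ}

noncomputable def toIntVec : (Fin n →₀ ℕ) →+ (Fin n → ℤ) :=
  Finsupp.coeFnAddHom.comp (Finsupp.mapRange.addMonoidHom (Nat.castAddMonoidHom ℤ))

theorem toIntVec_posPart_sub_posPart_neg (u : Fin n → ℤ) :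
    toIntVec (posPart u) - toIntVec (posPart (-u)) = u := by
  funext j
  simp only [toIntVec, _root_.posPart, AddMonoidHom.coe_comp, Function.comp_apply,
    Finsupp.coeFnAddHom_apply, Finsupp.mapRange.addMonoidHom_apply, Pi.sub_apply,
    Finsupp.mapRange_apply, Finsupp.coe_equivFunOnFinite_symm, Pi.neg_apply,
    Nat.coe_castAddMonoidHom]
  omega

variable (K : Type*) [CommRing K] (L : AddSubgroup (Fin n → ℤ))

noncomputable def latticeQuotientMap :
    MvPolynomial (Fin n) K →ₐ[K] AddMonoidAlgebra K ((Fin n → ℤ) ⧸ L) :=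
  AddMonoidAlgebra.mapDomainAlgHom K K ((QuotientAddGroup.mk' L).comp toIntVec)

theorem latticeQuotientMap_monomial (β : Fin n →₀ ℕ) :
    latticeQuotientMap K L (monomial β 1) =
      AddMonoidAlgebra.single (toIntVec β : (Fin n → ℤ) ⧸ L) 1 :=
  AddMonoidAlgebra.mapDomain_single

variable {K L} [Nontrivial K]

theorem latticeQuotientMap_binomial_eq_zero_iff {u : Fin n → ℤ} :
    latticeQuotientMap K L (monomial (posPart u) 1 - monomial (posPart (-u)) 1) = 0 ↔ u ∈ L := by
  rw [map_sub, sub_eq_zero, latticeQuotientMap_monomial, latticeQuotientMap_monomial,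
    AddMonoidAlgebra.single_left_inj one_ne_zero, QuotientAddGroup.eq, ← neg_mem_iff,
    neg_add_eq_sub, neg_sub, toIntVec_posPart_sub_posPart_neg]

theorem latticeIdeal_le_ker_latticeQuotientMap :
    latticeIdeal K L ≤ RingHom.ker (latticeQuotientMap K L) := by
  rw [latticeIdeal, Ideal.span_le]
  rintro _ ⟨u, hu, rfl⟩
  exact latticeQuotientMap_binomial_eq_zero_iff.2 hu

end

theorem stmt2_general {K : Type*} [Field K] {n : ℕ} (L : AddSubgroup (Fin n → ℤ))
    (u : Fin n → ℤ) :
    (monomial (posPart u) (1 : K) - monomial (posPart (-u)) (1 : K)) ∈ latticeIdeal K L ↔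
      u ∈ L :=
  ⟨fun h => latticeQuotientMap_binomial_eq_zero_iff.1 (latticeIdeal_le_ker_latticeQuotientMap h),
    fun hu => Ideal.subset_span ⟨u, hu, rfl⟩⟩

/-- the binomial `x^{u⁺} - x^{u⁻}` belongs to `I_L` iff `u ∈ L`. -/
theorem stmt2 {K : Type*} [Field K] {n : ℕ} (hn : 0 < n) (L : AddSubgroup (Fin n → ℤ))
    (u : Fin n → ℤ) :
    (monomial (posPart u) (1 : K) - monomial (posPart (-u)) (1 : K)) ∈ latticeIdeal K L ↔
      u ∈ L :=
  stmt2_general L u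
end

section
/- Let n be a positive integer and L a subgroup (lattice) of ℤ^n. Then L ∩ ℕ^n = {0} (i.e. the grading of K[x_1,…,x_n] by ℤ^n/L is positive) if and only if there exist positive integers m_1,…,m_n such that m_1u_1+⋯+m_nu_n = 0 for every u = (u_1,…,u_n) ∈ L. -/
open MvPolynomial

/-!
The easy direction: a vector `u ≥ 0` with `∑ mᵢ uᵢ = 0` for positive `mᵢ` vanishes.

The converse is Stiemke's transposition theorem over `ℚ`. Clearing denominators, `L ∩ ℕⁿ = {0}`
says that the rational span `V` of `L` meets the nonnegative orthant only in `0`; we find a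
strictly positive `y ∈ ℚⁿ` orthogonal to `V` and scale it to an integer vector. Such a `y` comes
from Gordan's alternative for the coordinate forms on `W = V^⊥`: either they are simultaneously
positive at some point of `W`, or some nonzero `c ≥ 0` satisfies `∑ cᵢ yᵢ = 0` on `W`, and then
`c ∈ W^⊥ = V`, which is excluded. Gordan's alternative for finitely many linear forms is proved
by induction on their number, eliminating the last form as in Fourier–Motzkin elimination.
-/

open Matrix Filter

section Gordan

variable {K E : Type*} [Field K] [LinearOrder K] [IsStrictOrderedRing K]
  [AddCommGroup E] [Module K E]

theorem LinearMap.exists_pos_of_forall_pos_mul_sub_mul {ι : Type*} [Finite ι]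
    (g : ι → E →ₗ[K] K) (a : E →ₗ[K] K) {x z w : E}
    (hz : ∀ i, 0 < g i x * a z - a x * g i z) (hw : 0 < a w) :
    ∃ y, (∀ i, 0 < g i y) ∧ 0 < a y := by
  set y := -a x • z + a z • x
  have hgy (i : ι) : 0 < g i y := by
    simp only [y, map_add, map_smul, smul_eq_mul]
    linarith [hz i]
  have hay : a y = 0 := by
    simp only [y, map_add, map_smul, smul_eq_mul]
    ring
  have hev : ∀ᶠ s in atTop, ∀ i, 0 < g i (s • y + w) := eventually_all.2 fun i => by
    filter_upwards [eventually_gt_atTop (-g i w / g i y)] with s hs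
    rw [div_lt_iff₀ (hgy i)] at hs
    simp only [map_add, map_smul, smul_eq_mul]
    linarith
  obtain ⟨s, hs⟩ := hev.exists
  refine ⟨s • y + w, hs, ?_⟩
  rwa [map_add, map_smul, hay, smul_zero, zero_add]

theorem LinearMap.exists_forall_pos_or_exists_nonneg_sum_eq_zero {m : ℕ}
    (f : Fin m → E →ₗ[K] K) :
    (∃ x, ∀ i, 0 < f i x) ∨ ∃ c : Fin m → K, 0 ≤ c ∧ c ≠ 0 ∧ ∀ y, ∑ i, c i * f i y = 0 := by
  induction m with
  | zero => exact .inl ⟨0, fun i => i.elim0⟩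
  | succ m ih =>
    set g : Fin m → E →ₗ[K] K := fun i => f i.castSucc
    set a := f (Fin.last m)
    simp only [Fin.forall_fin_succ', Fin.sum_univ_castSucc]
    rcases a.surjective_or_eq_zero with ha | ha
    swap
    · refine .inr ⟨Pi.single (Fin.last m) 1, Pi.single_nonneg.2 zero_le_one, by simp, fun y => ?_⟩
      simp [ha, a]
    obtain ⟨w, hw⟩ := ha 1
    rcases ih g with ⟨x, hx⟩ | ⟨c, hc0, hc, hcg⟩
    swap
    · refine .inr ⟨Fin.snoc c 0, fun i => ?_, fun h => hc ?_, fun y => ?_⟩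
      · induction i using Fin.lastCases with
        | last => simp
        | cast j => simpa using hc0 j
      · exact funext fun i => by simpa using congrFun h i.castSucc
      · simpa using hcg y
    by_cases hax : 0 < a x
    · exact .inl ⟨x, hx, hax⟩
    push Not at hax
    -- The forms `g i x • a - a x • g i` vanish at `x`; since `a x ≤ 0`, a nonnegative relation
    -- among them is one among the `f i`.
    rcases ih (fun i => g i x • a - a x • g i) with ⟨z, hz⟩ | ⟨μ, hμ0, hμ, hμb⟩
    · exact .inl (LinearMap.exists_pos_of_forall_pos_mul_sub_mul g a hz (hw ▸ one_pos))
    have hμg : 0 < ∑ i, μ i * g i x := by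
      obtain ⟨i, hi⟩ := Function.ne_iff.1 hμ
      exact Finset.sum_pos' (fun j _ => mul_nonneg (hμ0 j) (hx j).le)
        ⟨i, Finset.mem_univ i, mul_pos ((hμ0 i).lt_of_ne' hi) (hx i)⟩
    refine .inr ⟨Fin.snoc (fun i => -a x * μ i) (∑ i, μ i * g i x), fun i => ?_,
      fun h => hμg.ne' (by simpa using congrFun h (Fin.last m)), fun y => ?_⟩
    · induction i using Fin.lastCases with
      | last => simpa using hμg.le
      | cast j => simpa using mul_nonneg (neg_nonneg.2 hax) (hμ0 j)
    · simp only [Fin.snoc_castSucc, Fin.snoc_last, Finset.sum_mul, ← Finset.sum_add_distrib]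
      rw [← hμb y]
      refine Finset.sum_congr rfl fun i _ => ?_
      simp only [LinearMap.sub_apply, LinearMap.smul_apply, smul_eq_mul]
      ring

theorem Submodule.exists_forall_pos_dotProduct_eq_zero {n : ℕ} (V : Submodule K (Fin n → K))
    (hV : ∀ v ∈ V, 0 ≤ v → v = 0) : ∃ y : Fin n → K, (∀ i, 0 < y i) ∧ ∀ v ∈ V, v ⬝ᵥ y = 0 := by
  let ℓ := dotProductEquiv K (Fin n)
  let W : Submodule K (Fin n → K) := ⨅ v : V, LinearMap.ker (ℓ v)
  rcases LinearMap.exists_forall_pos_or_exists_nonneg_sum_eq_zero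
    fun i => (LinearMap.proj i).comp W.subtype with ⟨⟨y, hy⟩, hpos⟩ | ⟨c, hc0, hc, hcW⟩
  · exact ⟨y, hpos, fun v hv => (Submodule.mem_iInf _).1 hy ⟨v, hv⟩⟩
  have hcV : ℓ c ∈ V.map ℓ.toLinearMap := by
    rw [← Submodule.span_eq V, ← Submodule.span_image,
      ← Subtype.range_coe (s := (V : Set (Fin n → K))), ← Set.range_comp]
    refine FiniteDimensional.mem_span_of_iInf_ker_le_ker fun y hy => ?_
    simpa [ℓ, dotProduct] using hcW ⟨y, hy⟩
  obtain ⟨v, hv, hvc⟩ := hcV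
  rw [LinearEquiv.coe_coe, ℓ.injective.eq_iff] at hvc
  exact (hc (hV c (hvc ▸ hv) hc0)).elim

end Gordan

theorem AddSubgroup.exists_nsmul_mem_of_mem_span_rat {M : Type*} [AddCommGroup M] [Module ℚ M]
    (S : AddSubgroup M) {x : M} (hx : x ∈ Submodule.span ℚ (S : Set M)) :
    ∃ N : ℕ, 0 < N ∧ N • x ∈ S := by
  induction hx using Submodule.span_induction with
  | mem x hx => exact ⟨1, one_pos, by simpa using hx⟩
  | zero => exact ⟨1, one_pos, by simp⟩
  | add x y _ _ hx hy =>
    obtain ⟨N₁, hN₁, hx⟩ := hx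
    obtain ⟨N₂, hN₂, hy⟩ := hy
    refine ⟨N₂ * N₁, Nat.mul_pos hN₂ hN₁, ?_⟩
    convert S.add_mem (S.nsmul_mem hx N₂) (S.nsmul_mem hy N₁) using 1
    module
  | smul q x _ hx =>
    obtain ⟨N, hN, hx⟩ := hx
    refine ⟨q.den * N, Nat.mul_pos q.den_pos hN, ?_⟩
    convert S.zsmul_mem hx q.num using 1
    rw [← Nat.cast_smul_eq_nsmul ℚ, ← Nat.cast_smul_eq_nsmul ℚ N, ← Int.cast_smul_eq_zsmul ℚ,
      smul_smul, smul_smul, Nat.cast_mul, mul_right_comm, Rat.den_mul_eq_num]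

theorem Rat.exists_nsmul_eq_intCast_comp {ι : Type*} [Finite ι] (y : ι → ℚ) :
    ∃ N : ℕ, 0 < N ∧ ∃ m : ι → ℤ, N • y = (↑) ∘ m := by
  classical
  let S := (AddMonoidHom.compLeft (Int.castAddHom ℚ) ι).range
  have hy : y ∈ Submodule.span ℚ (S : Set (ι → ℚ)) :=
    Submodule.span_mono (Set.range_subset_iff.2 fun i =>
      AddMonoidHom.mem_range.2 ⟨Pi.single i 1, by ext; simp [Pi.single_apply]⟩)
      ((Pi.basisFun ℚ ι).mem_span y)
  obtain ⟨N, hN, m, hm⟩ := S.exists_nsmul_mem_of_mem_span_rat hy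
  exact ⟨N, hN, m, hm.symm⟩

theorem AddSubgroup.eq_zero_of_mem_span_map_intCast_of_nonneg {ι : Type*}
    (L : AddSubgroup (ι → ℤ)) (hL : ∀ u ∈ L, 0 ≤ u → u = 0) {v : ι → ℚ}
    (hv : v ∈ Submodule.span ℚ (L.map (AddMonoidHom.compLeft (Int.castAddHom ℚ) ι) : Set (ι → ℚ)))
    (hv0 : 0 ≤ v) : v = 0 := by
  obtain ⟨N, hN, u, hu, hNv⟩ := AddSubgroup.exists_nsmul_mem_of_mem_span_rat _ hv
  have hNv' (i : ι) : (u i : ℚ) = N * v i := by simpa using congrFun hNv i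
  have hu0 : u = 0 := hL u hu fun i => by
    exact_mod_cast show (0 : ℚ) ≤ u i by rw [hNv' i]; exact mul_nonneg N.cast_nonneg (hv0 i)
  funext i
  simpa [hu0, hN.ne'] using (hNv' i).symm

theorem stmt7_general {n : ℕ} (L : AddSubgroup (Fin n → ℤ)) :
    (∀ u ∈ L, (∀ i, 0 ≤ u i) → u = (0 : Fin n → ℤ)) ↔
      ∃ m : Fin n → ℤ, (∀ i, 0 < m i) ∧ ∀ u ∈ L, ∑ i, m i * u i = 0 := by
  constructor
  · intro hL
    obtain ⟨y, hy, hyL⟩ := Submodule.exists_forall_pos_dotProduct_eq_zero _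
      fun v hv => L.eq_zero_of_mem_span_map_intCast_of_nonneg hL hv
    obtain ⟨N, hN, m, hm⟩ := Rat.exists_nsmul_eq_intCast_comp y
    have hm' (i : Fin n) : (m i : ℚ) = N * y i := by simpa using (congrFun hm i).symm
    refine ⟨m, fun i => ?_, fun u hu => ?_⟩
    · exact_mod_cast show (0 : ℚ) < m i by rw [hm' i]; exact mul_pos (Nat.cast_pos.2 hN) (hy i)
    have huy : ∑ i, (u i : ℚ) * y i = 0 := hyL _ (Submodule.subset_span ⟨u, hu, rfl⟩)
    have hcast : ((∑ i, m i * u i : ℤ) : ℚ) = N * ∑ i, (u i : ℚ) * y i := by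
      push_cast
      simp only [hm', Finset.mul_sum]
      exact Finset.sum_congr rfl fun i _ => by ring
    rw [huy, mul_zero] at hcast
    exact_mod_cast hcast
  · rintro ⟨m, hm, hmL⟩ u hu hu0
    have := (Finset.sum_eq_zero_iff_of_nonneg fun i _ => mul_nonneg (hm i).le (hu0 i)).1 (hmL u hu)
    exact funext fun i => (mul_eq_zero.1 (this i (Finset.mem_univ i))).resolve_left (hm i).ne'

/-- `L ∩ ℕⁿ = {0}` iff there are positive integers `m₁,…,mₙ` with
`m₁u₁ + ⋯ + mₙuₙ = 0` for every `u ∈ L`. -/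
theorem stmt7 {n : ℕ} (hn : 0 < n) (L : AddSubgroup (Fin n → ℤ)) :
    (∀ u ∈ L, (∀ i, 0 ≤ u i) → u = (0 : Fin n → ℤ)) ↔
      ∃ m : Fin n → ℤ, (∀ i, 0 < m i) ∧ ∀ u ∈ L, ∑ i, m i * u i = 0 :=
  stmt7_general L
end

section
/- With the notation of the geometric setup: if F_1,…,F_s ∈ K[x_1,…,x_n] generate rad(I_L) up to radical, i.e. rad(I_L) = rad((F_1,…,F_s)), then the union ⋃_{i=1}^{s} D_{L'}^{L}(F_i) is a spanning subcomplex of D_{L'}^{L}; that is, every vertex 𝔼_j of D_{L'}^{L} is a vertex of D_{L'}^{L}(F_i) for some i. -/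
/-!
Fix a minimal non-face `τ = σ(𝔼)` and let `S` be the set of indices `k` for which `a_k` lies in
one of the faces `σ(𝔼 ∖ {i})` of `σ`. Let `φ_S` be the monomial map sending `x_k` to the Laurent
monomial `y^{a_k}` for `k ∈ S` and to `0` otherwise.

If no monomial of `F ∈ rad(I_L)` has cone `τ`, every monomial of `F` supported in `S` lies in a
single face `σ(𝔼 ∖ {i₀})`, hence so does every monomial of `F` of the same `A`-degree. As the full
monomial map `x_k ↦ y^{a_k}` kills `rad(I_L)`, this forces `φ_S(F) = 0`.

On the other hand `τ = pos(a_k : k ∈ S)` is not a face, and Gordan's theorem turns this into a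
vector `w ∈ L` with `w⁺` supported in `S` and `w⁻` not, so that
`φ_S(x^{w⁺} - x^{w⁻}) = y^{A w⁺} ≠ 0`. Hence `φ_S` cannot kill all of `F_1, …, F_s`, whose
radical contains this binomial.
-/

open MvPolynomial

/-- The cone `pos_ℚ(v₁,…,vₙ)` spanned by finitely many vectors of `ℚ^m`. -/
def posQ {n m : ℕ} (v : Fin n → Fin m → ℚ) : Set (Fin m → ℚ) :=
  {x | ∃ d : Fin n → ℚ, (∀ i, 0 ≤ d i) ∧ x = ∑ i, d i • v i}

/-- The subcone `σ(E) = pos_ℚ(rᵢ : i ∈ E)`. -/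
def posE {t m : ℕ} (r : Fin t → Fin m → ℚ) (E : Finset (Fin t)) : Set (Fin m → ℚ) :=
  {x | ∃ d : Fin t → ℚ, (∀ i, 0 ≤ d i) ∧ (∀ i ∉ E, d i = 0) ∧ x = ∑ i, d i • r i}

/-- The relative interior `relint_ℚ(pos_ℚ(rᵢ : i ∈ E))`. -/
def relintE {t m : ℕ} (r : Fin t → Fin m → ℚ) (E : Finset (Fin t)) : Set (Fin m → ℚ) :=
  {x | ∃ d : Fin t → ℚ, (∀ i ∈ E, 0 < d i) ∧ (∀ i ∉ E, d i = 0) ∧ x = ∑ i, d i • r i}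

/-- `F` is a face of the cone `σ`: it is cut out by a supporting linear functional. -/
def IsFaceOf {m : ℕ} (σ F : Set (Fin m → ℚ)) : Prop :=
  ∃ c : Fin m → ℚ, (∀ x ∈ σ, 0 ≤ ∑ j, c j * x j) ∧ F = σ ∩ {x | ∑ j, c j * x j = 0}

/-- The ray spanned by a vector `v`. -/
def rayOf {m : ℕ} (v : Fin m → ℚ) : Set (Fin m → ℚ) := {x | ∃ q : ℚ, 0 ≤ q ∧ x = q • v}

/-- Cast a family of integer vectors to rational vectors. -/
def castQ {n m : ℕ} (a : Fin n → Fin m → ℤ) : Fin n → Fin m → ℚ := fun i j => (a i j : ℚ)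

/-- `T` is a face of the simplicial complex `D` (with vertices `𝔼₁,…,𝔼_f`) determined by the
projected cone data `rB`: the relative interiors of the cones `pos_ℚ(rB j : j ∈ 𝔼ᵢ)`, `i ∈ T`,
have a common point. -/
def DFace {t f m : ℕ} (rB : Fin t → Fin m → ℚ) (𝔼 : Fin f → Finset (Fin t))
    (T : Set (Fin f)) : Prop :=
  (⋂ j ∈ T, relintE rB (𝔼 j)).Nonempty

/-- The cone `cone(N)` of a monomial with exponent vector `u`:
the intersection of all subcones `σ(E)` containing all the `aᵢ` with `i` in the support of `u`. -/
def coneOf {n t m : ℕ} (aQ : Fin n → Fin m → ℚ) (rQ : Fin t → Fin m → ℚ)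
    (u : Fin n →₀ ℕ) : Set (Fin m → ℚ) :=
  ⋂ E ∈ {E : Finset (Fin t) | ∀ i ∈ u.support, aQ i ∈ posE rQ E}, posE rQ E

section Gordan

open Matrix

lemma snoc_dotProduct {R : Type*} [CommSemiring R] {m : ℕ} (c : Fin m → R) (a : R)
    (x : Fin (m + 1) → R) : Fin.snoc c a ⬝ᵥ x = c ⬝ᵥ Fin.init x + a * x (Fin.last m) := by
  simp [dotProduct, Fin.sum_univ_castSucc, Fin.init]

variable {𝕜 : Type*} [Field 𝕜] [LinearOrder 𝕜]

namespace FourierMotzkin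

variable {ι : Type*} [DecidableEq ι]

/-- Eliminating a coordinate with values `ℓ i`: the single indices where it vanishes and the
pairs of indices where it has opposite signs. -/
abbrev Index (ℓ : ι → 𝕜) : Type _ := {i // ℓ i = 0} ⊕ {pq : ι × ι // 0 < ℓ pq.1 ∧ ℓ pq.2 < 0}

def coeff (ℓ : ι → 𝕜) : Index ℓ → ι → 𝕜 :=
  Sum.elim (fun z => Pi.single z.1 1)
    fun pq => Pi.single pq.1.1 (-ℓ pq.1.2) + Pi.single pq.1.2 (ℓ pq.1.1)

lemma sum_coeff_inl_mul [Fintype ι] (ℓ : ι → 𝕜) (z : {i // ℓ i = 0}) (f : ι → 𝕜) :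
    ∑ i, coeff ℓ (.inl z) i * f i = f z.1 := by
  simp [coeff, Pi.single_apply]

lemma sum_coeff_inr_mul [Fintype ι] (ℓ : ι → 𝕜) (pq : {pq : ι × ι // 0 < ℓ pq.1 ∧ ℓ pq.2 < 0})
    (f : ι → 𝕜) : ∑ i, coeff ℓ (.inr pq) i * f i = -ℓ pq.1.2 * f pq.1.1 + ℓ pq.1.1 * f pq.1.2 := by
  simp [coeff, Pi.single_apply, add_mul, Finset.sum_add_distrib]

lemma sum_coeff_mul_self [Fintype ι] (ℓ : ι → 𝕜) (x : Index ℓ) : ∑ i, coeff ℓ x i * ℓ i = 0 := by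
  rcases x with z | pq
  · rw [sum_coeff_inl_mul]; exact z.2
  · rw [sum_coeff_inr_mul]; ring

lemma coeff_nonneg [IsStrictOrderedRing 𝕜] (ℓ : ι → 𝕜) (x : Index ℓ) (i : ι) : 0 ≤ coeff ℓ x i := by
  rcases x with z | ⟨⟨p, q⟩, hp, hq⟩
  · simp only [coeff, Sum.elim_inl, Pi.single_apply]; split_ifs <;> norm_num
  · simp only [coeff, Sum.elim_inr, Pi.add_apply, Pi.single_apply]
    split_ifs <;> linarith

lemma exists_coeff_pos [IsStrictOrderedRing 𝕜] (ℓ : ι → 𝕜) (x : Index ℓ) :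
    ∃ i, 0 < coeff ℓ x i := by
  rcases x with z | ⟨⟨p, q⟩, hp, hq⟩
  · exact ⟨z.1, by simp [coeff]⟩
  · have hpq : p ≠ q := by rintro rfl; linarith
    refine ⟨p, ?_⟩
    simp only [coeff, Sum.elim_inr, Pi.add_apply, Pi.single_eq_same, Pi.single_eq_of_ne hpq]
    linarith

/-- The one-variable step of Fourier–Motzkin elimination. -/
lemma exists_add_mul_pos [IsStrictOrderedRing 𝕜] [Fintype ι] {ℓ s : ι → 𝕜}
    (h : ∀ x : Index ℓ, 0 < ∑ i, coeff ℓ x i * s i) :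
    ∃ a, ∀ i, 0 < s i + a * ℓ i := by
  obtain ⟨a, hlo, hhi⟩ := Order.exists_between_finsets
    ((Finset.univ.filter fun p => 0 < ℓ p).image fun p => -s p / ℓ p)
    ((Finset.univ.filter fun q => ℓ q < 0).image fun q => s q / -ℓ q) (by
      simp only [Finset.mem_image, Finset.mem_filter, Finset.mem_univ, true_and]
      rintro _ ⟨p, hp, rfl⟩ _ ⟨q, hq, rfl⟩
      have hpq := h (.inr ⟨(p, q), hp, hq⟩)
      rw [sum_coeff_inr_mul] at hpq
      rw [div_lt_div_iff₀ hp (neg_pos.2 hq)]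
      linarith)
  refine ⟨a, fun i => ?_⟩
  rcases lt_trichotomy (ℓ i) 0 with hneg | hzero | hpos
  · have := hhi _ (Finset.mem_image_of_mem _ (by simpa using hneg))
    rw [lt_div_iff₀ (neg_pos.2 hneg)] at this
    linarith
  · have := h (.inl ⟨i, hzero⟩)
    rw [sum_coeff_inl_mul] at this
    rwa [hzero, mul_zero, add_zero]
  · have := hlo _ (Finset.mem_image_of_mem _ (by simpa using hpos))
    rw [div_lt_iff₀ hpos] at this
    linarith

end FourierMotzkin

variable [IsStrictOrderedRing 𝕜]

lemma eq_zero_of_nonneg_relation_of_nonneg_combination {ι κ E : Type*} [Fintype ι] [Fintype κ]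
    [AddCommGroup E] [Module 𝕜 E] {v : ι → E}
    (hv : ∀ l : ι → 𝕜, (∀ i, 0 ≤ l i) → ∑ i, l i • v i = 0 → ∀ i, l i = 0)
    (M : κ → ι → 𝕜) (hM : ∀ x i, 0 ≤ M x i) (hMpos : ∀ x, ∃ i, 0 < M x i)
    (μ : κ → 𝕜) (hμ : ∀ x, 0 ≤ μ x) (hsum : ∑ x, μ x • ∑ i, M x i • v i = 0) (x : κ) :
    μ x = 0 := by
  set l : ι → 𝕜 := fun i => ∑ y, μ y * M y i
  have hl : ∀ i, 0 ≤ l i := fun i => Finset.sum_nonneg fun y _ => mul_nonneg (hμ y) (hM y i)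
  have hrel : ∑ i, l i • v i = 0 := by
    simp only [l, Finset.sum_smul, mul_smul, Finset.smul_sum] at hsum ⊢
    rwa [Finset.sum_comm]
  obtain ⟨i, hi⟩ := hMpos x
  have hterm := (Finset.sum_eq_zero_iff_of_nonneg fun y _ => mul_nonneg (hμ y) (hM y i)).1
    (hv l hl hrel i) x (Finset.mem_univ x)
  exact (mul_eq_zero.1 hterm).resolve_right hi.ne'

open FourierMotzkin in
/-- **Gordan's theorem**, by Fourier–Motzkin elimination of the last coordinate. -/
theorem exists_dotProduct_pos {m : ℕ} {ι : Type*} [Fintype ι] (v : ι → Fin m → 𝕜)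
    (hv : ∀ l : ι → 𝕜, (∀ i, 0 ≤ l i) → ∑ i, l i • v i = 0 → ∀ i, l i = 0) :
    ∃ c : Fin m → 𝕜, ∀ i, 0 < c ⬝ᵥ v i := by
  classical
  induction m generalizing ι with
  | zero =>
    exact ⟨0, fun i => absurd (hv (fun _ => 1) (fun _ => zero_le_one) (Subsingleton.elim _ _) i)
      one_ne_zero⟩
  | succ m ih =>
    set ℓ : ι → 𝕜 := fun i => v i (Fin.last m)
    set w : Index ℓ → Fin (m + 1) → 𝕜 := fun x => ∑ i, coeff ℓ x i • v i
    have hw : ∀ x j, w x j = ∑ i, coeff ℓ x i * v i j := by simp [w, Finset.sum_apply]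
    obtain ⟨c, hc⟩ := ih (fun x => Fin.init (w x)) fun μ hμ hsum x => by
      refine eq_zero_of_nonneg_relation_of_nonneg_combination hv _ (coeff_nonneg ℓ)
        (exists_coeff_pos ℓ) μ hμ ?_ x
      have hlast : ∀ x, w x (Fin.last m) = 0 := fun x => by rw [hw]; exact sum_coeff_mul_self ℓ x
      change ∑ x, μ x • w x = 0
      funext j
      refine Fin.lastCases ?_ (fun j => ?_) j
      · simp [Finset.sum_apply, hlast]
      · simpa [Finset.sum_apply, Fin.init] using congrFun hsum j
    obtain ⟨a, ha⟩ := exists_add_mul_pos (s := fun i => c ⬝ᵥ Fin.init (v i)) fun x => by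
      convert hc x using 1
      simp only [dotProduct, Fin.init, hw, Finset.mul_sum]
      rw [Finset.sum_comm]
      exact Finset.sum_congr rfl fun i _ => Finset.sum_congr rfl fun j _ => by ring
    exact ⟨Fin.snoc c a, fun i => by rw [snoc_dotProduct]; exact ha i⟩

/-- Gordan's theorem modulo a subspace `V`, applied in coordinates on the quotient by `V`. -/
theorem exists_dotProduct_pos_of_mem_submodule {m : ℕ} {ι : Type*} [Fintype ι]
    (V : Submodule 𝕜 (Fin m → 𝕜)) (v : ι → Fin m → 𝕜)
    (hv : ∀ l : ι → 𝕜, (∀ i, 0 ≤ l i) → ∑ i, l i • v i ∈ V → ∀ i, l i = 0) :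
    ∃ c : Fin m → 𝕜, (∀ x ∈ V, c ⬝ᵥ x = 0) ∧ ∀ i, 0 < c ⬝ᵥ v i := by
  let P := (Module.finBasis 𝕜 ((Fin m → 𝕜) ⧸ V)).equivFun.toLinearMap ∘ₗ V.mkQ
  have hP : ∀ x, P x = 0 ↔ x ∈ V := by simp [P, Submodule.Quotient.mk_eq_zero]
  obtain ⟨c, hc⟩ := exists_dotProduct_pos (fun i => P (v i)) fun l hl hsum =>
    hv l hl ((hP _).1 (by simpa [map_sum, map_smul] using hsum))
  refine ⟨c ᵥ* LinearMap.toMatrix' P, fun x hx => ?_, fun i => ?_⟩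
  · rw [← dotProduct_mulVec, LinearMap.toMatrix'_mulVec, (hP x).2 hx, dotProduct_zero]
  · rw [← dotProduct_mulVec, LinearMap.toMatrix'_mulVec]
    exact hc i

end Gordan

section Cones

variable {n m t : ℕ}

lemma isFaceOf_iff {σ Φ : Set (Fin m → ℚ)} :
    IsFaceOf σ Φ ↔ ∃ c, (∀ x ∈ σ, 0 ≤ c ⬝ᵥ x) ∧ Φ = σ ∩ {x | c ⬝ᵥ x = 0} :=
  Iff.rfl

lemma sum_smul_mem_posQ (v : Fin n → Fin m → ℚ) {d : Fin n → ℚ} (hd : ∀ i, 0 ≤ d i) :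
    ∑ i, d i • v i ∈ posQ v :=
  ⟨d, hd, rfl⟩

lemma mem_posQ_self (v : Fin n → Fin m → ℚ) (i : Fin n) : v i ∈ posQ v := by
  classical
  simpa [Pi.single_apply] using sum_smul_mem_posQ v (d := Pi.single i 1) (by
    intro j; by_cases h : j = i <;> simp [h])

lemma zero_mem_posE (r : Fin t → Fin m → ℚ) (E : Finset (Fin t)) : 0 ∈ posE r E :=
  ⟨0, fun _ => le_rfl, fun _ _ => rfl, by simp⟩

lemma add_mem_posE {r : Fin t → Fin m → ℚ} {E : Finset (Fin t)} {x y : Fin m → ℚ}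
    (hx : x ∈ posE r E) (hy : y ∈ posE r E) : x + y ∈ posE r E := by
  obtain ⟨d, hd, hdE, rfl⟩ := hx
  obtain ⟨e, he, heE, rfl⟩ := hy
  exact ⟨d + e, fun i => add_nonneg (hd i) (he i), fun i hi => by simp [hdE i hi, heE i hi],
    by simp [add_smul, Finset.sum_add_distrib]⟩

lemma smul_mem_posE {r : Fin t → Fin m → ℚ} {E : Finset (Fin t)} {x : Fin m → ℚ} {q : ℚ}
    (hq : 0 ≤ q) (hx : x ∈ posE r E) : q • x ∈ posE r E := by
  obtain ⟨d, hd, hdE, rfl⟩ := hx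
  exact ⟨q • d, fun i => mul_nonneg hq (hd i), fun i hi => by simp [hdE i hi],
    by simp [Finset.smul_sum, smul_smul]⟩

lemma sum_smul_mem_posE {r : Fin t → Fin m → ℚ} {E : Finset (Fin t)} {ι : Type*} (s : Finset ι)
    {d : ι → ℚ} {w : ι → Fin m → ℚ} (hd : ∀ i ∈ s, 0 ≤ d i)
    (hw : ∀ i ∈ s, d i ≠ 0 → w i ∈ posE r E) : ∑ i ∈ s, d i • w i ∈ posE r E := by
  refine Finset.sum_induction _ (· ∈ posE r E) (fun _ _ => add_mem_posE) (zero_mem_posE r E)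
    fun i hi => ?_
  by_cases h : d i = 0
  · simpa [h] using zero_mem_posE r E
  · exact smul_mem_posE (hd i hi) (hw i hi h)

lemma mem_posE_self (r : Fin t → Fin m → ℚ) {E : Finset (Fin t)} {i : Fin t} (hi : i ∈ E) :
    r i ∈ posE r E := by
  classical
  refine ⟨Pi.single i 1, fun j => ?_, fun j hj => ?_, by simp [Pi.single_apply]⟩
  · by_cases h : j = i <;> simp [h]
  · simp [show j ≠ i by rintro rfl; exact hj hi]

lemma posE_subset_of_forall_mem {t' : ℕ} {r : Fin t → Fin m → ℚ} {r' : Fin t' → Fin m → ℚ}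
    {E : Finset (Fin t)} {E' : Finset (Fin t')}
    (h : ∀ i ∈ E, r i ∈ posE r' E') : posE r E ⊆ posE r' E' := by
  rintro _ ⟨d, hd, hdE, rfl⟩
  rw [← Finset.sum_subset (Finset.subset_univ E) fun i _ hi => by rw [hdE i hi, zero_smul]]
  exact sum_smul_mem_posE E (fun i _ => hd i) fun i hi _ => h i hi

lemma posE_mono (r : Fin t → Fin m → ℚ) {E E' : Finset (Fin t)} (h : E ⊆ E') :
    posE r E ⊆ posE r E' :=
  posE_subset_of_forall_mem fun _ hi => mem_posE_self r (h hi)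

lemma posE_subset_posQ (r : Fin t → Fin m → ℚ) (E : Finset (Fin t)) : posE r E ⊆ posQ r := by
  rintro _ ⟨d, hd, -, rfl⟩
  exact sum_smul_mem_posQ r hd

lemma posE_singleton (r : Fin t → Fin m → ℚ) (i : Fin t) : posE r {i} = rayOf (r i) := by
  ext x
  constructor
  · rintro ⟨d, hd, hdE, rfl⟩
    refine ⟨d i, hd i, Finset.sum_eq_single i (fun j _ hj => ?_) (by simp)⟩
    rw [hdE j (by simpa using hj), zero_smul]
  · rintro ⟨q, hq, rfl⟩
    exact smul_mem_posE hq (mem_posE_self r (Finset.mem_singleton_self i))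

lemma mem_rayOf_self (v : Fin m → ℚ) : v ∈ rayOf v := ⟨1, zero_le_one, (one_smul _ _).symm⟩

lemma rayOf_smul {v : Fin m → ℚ} {q : ℚ} (hq : 0 < q) : rayOf (q • v) = rayOf v := by
  ext x
  constructor
  · rintro ⟨p, hp, rfl⟩
    exact ⟨p * q, mul_nonneg hp hq.le, by rw [smul_smul]⟩
  · rintro ⟨p, hp, rfl⟩
    exact ⟨p / q, div_nonneg hp hq.le, by rw [smul_smul, div_mul_cancel₀ _ hq.ne']⟩

lemma IsFaceOf.sum_smul_mem_iff {v : Fin n → Fin m → ℚ} {Φ : Set (Fin m → ℚ)}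
    (hΦ : IsFaceOf (posQ v) Φ) {d : Fin n → ℚ} (hd : ∀ i, 0 ≤ d i) :
    ∑ i, d i • v i ∈ Φ ↔ ∀ i, d i ≠ 0 → v i ∈ Φ := by
  obtain ⟨c, hc, rfl⟩ := isFaceOf_iff.1 hΦ
  have hcv : ∀ i, 0 ≤ c ⬝ᵥ v i := fun i => hc _ (mem_posQ_self v i)
  simp only [Set.mem_inter_iff, Set.mem_ofPred_eq, sum_smul_mem_posQ v hd, mem_posQ_self,
    true_and, dotProduct_sum, dotProduct_smul, smul_eq_mul,
    Finset.sum_eq_zero_iff_of_nonneg fun i _ => mul_nonneg (hd i) (hcv i), Finset.mem_univ,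
    forall_const, mul_eq_zero]
  exact forall_congr' fun i => or_iff_not_imp_left

lemma exists_add_mem_posE_of_mem_span {r : Fin t → Fin m → ℚ} {E : Finset (Fin t)}
    {x : Fin m → ℚ} (hx : x ∈ Submodule.span ℚ (posE r E)) : ∃ y ∈ posE r E, x + y ∈ posE r E := by
  induction hx using Submodule.span_induction with
  | mem x hx => exact ⟨0, zero_mem_posE r E, by simpa using hx⟩
  | zero => exact ⟨0, zero_mem_posE r E, by simpa using zero_mem_posE r E⟩
  | add x y _ _ hx hy =>
    obtain ⟨x', hx', hxx'⟩ := hx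
    obtain ⟨y', hy', hyy'⟩ := hy
    exact ⟨x' + y', add_mem_posE hx' hy', by convert add_mem_posE hxx' hyy' using 1; abel⟩
  | smul q x _ hx =>
    obtain ⟨y, hy, hxy⟩ := hx
    rcases le_or_gt 0 q with hq | hq
    · exact ⟨q • y, smul_mem_posE hq hy, by rw [← smul_add]; exact smul_mem_posE hq hxy⟩
    · refine ⟨(-q) • (x + y), smul_mem_posE (neg_nonneg.2 hq.le) hxy, ?_⟩
      convert smul_mem_posE (neg_nonneg.2 hq.le) hy using 1
      module

open Classical in
lemma eq_zero_of_sum_smul_mem_span {v : Fin n → Fin m → ℚ} {S : Finset (Fin n)}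
    (h : ∀ β : Fin n → ℚ, (∀ k, 0 ≤ β k) → ∑ k, β k • v k ∈ posE v S →
      ∀ k, β k ≠ 0 → v k ∈ posE v S)
    (l : {k // v k ∉ posE v S} → ℚ) (hl : ∀ k, 0 ≤ l k)
    (hx : ∑ k, l k • v k ∈ Submodule.span ℚ (posE v S)) (k : {k // v k ∉ posE v S}) :
    l k = 0 := by
  obtain ⟨y, ⟨d, hd, -, rfl⟩, hxy⟩ := exists_add_mem_posE_of_mem_span hx
  set β : Fin n → ℚ := fun j => d j + if hj : v j ∈ posE v S then 0 else l ⟨j, hj⟩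
  have hβ : ∑ j, β j • v j = ∑ k, l k • v k + ∑ j, d j • v j := by
    simp only [β, add_smul, Finset.sum_add_distrib, add_comm (∑ j, d j • v j)]
    congr 1
    rw [← Fintype.sum_subtype_add_sum_subtype (fun j => v j ∈ posE v S),
      Finset.sum_eq_zero fun j _ => by rw [dif_pos j.2, zero_smul], zero_add]
    exact Finset.sum_congr rfl fun k _ => by rw [dif_neg k.2]
  have hβk : β k = d k + l k := by simp [β, k.2]
  by_contra hlk
  refine k.2 (h β (fun j => add_nonneg (hd j) ?_) (hβ ▸ hxy) k ?_)
  · split_ifs <;> simp [hl]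
  · rw [hβk]
    exact (add_pos_of_nonneg_of_pos (hd k) ((hl k).lt_of_ne' hlk)).ne'

lemma isFaceOf_posE_of_extreme {v : Fin n → Fin m → ℚ} (S : Finset (Fin n))
    (h : ∀ β : Fin n → ℚ, (∀ k, 0 ≤ β k) → ∑ k, β k • v k ∈ posE v S →
      ∀ k, β k ≠ 0 → v k ∈ posE v S) :
    IsFaceOf (posQ v) (posE v S) := by
  classical
  set τ := posE v S
  obtain ⟨c, hcτ, hcpos⟩ := exists_dotProduct_pos_of_mem_submodule (Submodule.span ℚ τ)
    (fun k : {k // v k ∉ τ} => v k) (eq_zero_of_sum_smul_mem_span h)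
  have hcτ' : ∀ x ∈ τ, c ⬝ᵥ x = 0 := fun x hx => hcτ x (Submodule.subset_span hx)
  have hcv : ∀ k, 0 ≤ c ⬝ᵥ v k := fun k =>
    if hk : v k ∈ τ then (hcτ' _ hk).ge else (hcpos ⟨k, hk⟩).le
  refine isFaceOf_iff.2 ⟨c, ?_, Set.Subset.antisymm
    (fun x hx => ⟨posE_subset_posQ v S hx, hcτ' x hx⟩) ?_⟩
  · rintro _ ⟨d, hd, rfl⟩
    simp only [dotProduct_sum, dotProduct_smul, smul_eq_mul]
    exact Finset.sum_nonneg fun k _ => mul_nonneg (hd k) (hcv k)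
  · rintro _ ⟨⟨d, hd, rfl⟩, hx⟩
    simp only [Set.mem_ofPred_eq, dotProduct_sum, dotProduct_smul, smul_eq_mul,
      Finset.sum_eq_zero_iff_of_nonneg fun k _ => mul_nonneg (hd k) (hcv k)] at hx
    refine sum_smul_mem_posE _ (fun k _ => hd k) fun k _ hdk => by_contra fun hk => ?_
    exact mul_ne_zero hdk (hcpos ⟨k, hk⟩).ne' (hx k (Finset.mem_univ k))

end Cones

section ExtremeRays

variable {n m t : ℕ}

structure IsExtremeRayGens (σ : Set (Fin m → ℚ)) (r : Fin t → Fin m → ℚ) : Prop where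
  ne_zero : ∀ i, r i ≠ 0
  isFaceOf_rayOf : ∀ i, IsFaceOf σ (rayOf (r i))
  injective : ∀ i j, rayOf (r i) = rayOf (r j) → i = j
  eq_posQ : σ = posQ r

structure IsMinimalNonFace (σ : Set (Fin m → ℚ)) (r : Fin t → Fin m → ℚ) (E : Finset (Fin t)) :
    Prop where
  not_isFaceOf : ¬ IsFaceOf σ (posE r E)
  eq_of_subset : ∀ E', ¬ IsFaceOf σ (posE r E') → posE r E' ⊆ posE r E → posE r E' = posE r E

namespace IsExtremeRayGens

variable {σ : Set (Fin m → ℚ)} {r : Fin t → Fin m → ℚ} (hr : IsExtremeRayGens σ r)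
include hr

lemma mem_of_mem_posE {i : Fin t} {E : Finset (Fin t)} (h : r i ∈ posE r E) : i ∈ E := by
  by_contra hi
  obtain ⟨d, hd, hdE, hx⟩ := h
  have hray := hr.isFaceOf_rayOf i
  rw [hr.eq_posQ] at hray
  have hmem := (hray.sum_smul_mem_iff hd).1 (hx ▸ mem_rayOf_self (r i))
  refine hr.ne_zero i (hx.trans (Finset.sum_eq_zero fun j _ => ?_))
  by_cases hdj : d j = 0
  · rw [hdj, zero_smul]
  obtain ⟨q, hq, hrj⟩ := hmem j hdj
  have hq : 0 < q := hq.lt_of_ne (by rintro rfl; exact hr.ne_zero j (by simpa using hrj))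
  obtain rfl := hr.injective j i (by rw [hrj, rayOf_smul hq])
  exact absurd (hdE j hi) hdj

lemma mem_posE_inter {E₀ E₁ : Finset (Fin t)} (hface : IsFaceOf σ (posE r E₁)) {x : Fin m → ℚ}
    (h₀ : x ∈ posE r E₀) (h₁ : x ∈ posE r E₁) : x ∈ posE r (E₀ ∩ E₁) := by
  obtain ⟨d, hd, hdE, rfl⟩ := h₀
  rw [hr.eq_posQ] at hface
  have hmem := (hface.sum_smul_mem_iff hd).1 h₁
  refine ⟨d, hd, fun i hi => by_contra fun hdi => hi (Finset.mem_inter.2 ⟨?_, ?_⟩), rfl⟩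
  · exact by_contra fun h => hdi (hdE i h)
  · exact hr.mem_of_mem_posE (hmem i hdi)

end IsExtremeRayGens

lemma IsExtremeRayGens.exists_smul_eq {v : Fin n → Fin m → ℚ} {r : Fin t → Fin m → ℚ}
    (hr : IsExtremeRayGens (posQ v) r) (i : Fin t) : ∃ k, ∃ q : ℚ, 0 < q ∧ v k = q • r i := by
  obtain ⟨d, hd, hx⟩ : r i ∈ posQ v := hr.eq_posQ ▸ mem_posQ_self r i
  have hmem := ((hr.isFaceOf_rayOf i).sum_smul_mem_iff hd).1 (hx ▸ mem_rayOf_self (r i))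
  obtain ⟨k, -, hk⟩ := Finset.exists_ne_zero_of_sum_ne_zero (hx ▸ hr.ne_zero i)
  obtain ⟨q, hq, hvk⟩ := hmem k (left_ne_zero_of_smul hk)
  exact ⟨k, q, hq.lt_of_ne (by rintro rfl; simp [hvk] at hk), hvk⟩

namespace IsMinimalNonFace

variable {σ : Set (Fin m → ℚ)} {r : Fin t → Fin m → ℚ} {E : Finset (Fin t)}
  (hE : IsMinimalNonFace σ r E) (hr : IsExtremeRayGens σ r)
include hE hr

lemma isFaceOf_erase {i : Fin t} (hi : i ∈ E) : IsFaceOf σ (posE r (E.erase i)) := by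
  by_contra hnf
  have heq := hE.eq_of_subset _ hnf (posE_mono r (E.erase_subset i))
  exact Finset.notMem_erase i E (hr.mem_of_mem_posE (heq ▸ mem_posE_self r hi))

lemma exists_ne {i : Fin t} (hi : i ∈ E) : ∃ j ∈ E, j ≠ i := by
  by_contra! h
  apply hE.not_isFaceOf
  rw [Finset.eq_singleton_iff_unique_mem.2 ⟨hi, h⟩, posE_singleton]
  exact hr.isFaceOf_rayOf i

end IsMinimalNonFace

end ExtremeRays

section Boundary

variable {n m t : ℕ} {v : Fin n → Fin m → ℚ} {r : Fin t → Fin m → ℚ} {E : Finset (Fin t)}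

noncomputable def boundaryIndices (v : Fin n → Fin m → ℚ) (r : Fin t → Fin m → ℚ)
    (E : Finset (Fin t)) : Finset (Fin n) := by
  classical exact Finset.univ.filter fun k => ∃ i ∈ E, v k ∈ posE r (E.erase i)

lemma mem_boundaryIndices {k : Fin n} :
    k ∈ boundaryIndices v r E ↔ ∃ i ∈ E, v k ∈ posE r (E.erase i) := by
  simp [boundaryIndices]

lemma mem_posE_of_mem_boundaryIndices {k : Fin n} (hk : k ∈ boundaryIndices v r E) :
    v k ∈ posE r E := by
  obtain ⟨i, -, hki⟩ := mem_boundaryIndices.1 hk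
  exact posE_mono r (E.erase_subset i) hki

lemma IsMinimalNonFace.posE_eq_posE_boundaryIndices (hE : IsMinimalNonFace (posQ v) r E)
    (hr : IsExtremeRayGens (posQ v) r) : posE r E = posE v (boundaryIndices v r E) := by
  apply Set.Subset.antisymm
  · refine posE_subset_of_forall_mem fun i hi => ?_
    obtain ⟨k, q, hq, hvk⟩ := hr.exists_smul_eq i
    obtain ⟨j, hj, hji⟩ := hE.exists_ne hr hi
    have hk : k ∈ boundaryIndices v r E := mem_boundaryIndices.2
      ⟨j, hj, hvk ▸ smul_mem_posE hq.le (mem_posE_self r (Finset.mem_erase.2 ⟨hji.symm, hi⟩))⟩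
    have hri : r i = q⁻¹ • v k := by rw [hvk, smul_smul, inv_mul_cancel₀ hq.ne', one_smul]
    exact hri ▸ smul_mem_posE (inv_nonneg.2 hq.le) (mem_posE_self v hk)
  · exact posE_subset_of_forall_mem fun k hk => mem_posE_of_mem_boundaryIndices hk

lemma IsMinimalNonFace.exists_forall_mem_posE_erase (hE : IsMinimalNonFace (posQ v) r E)
    (hr : IsExtremeRayGens (posQ v) r) {N : Fin n →₀ ℕ}
    (hN : ∀ k ∈ N.support, k ∈ boundaryIndices v r E) (hcone : coneOf v r N ≠ posE r E) :
    ∃ i₀ ∈ E, ∀ k ∈ N.support, v k ∈ posE r (E.erase i₀) := by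
  have hsub : coneOf v r N ⊆ posE r E :=
    Set.biInter_subset_of_mem fun k hk => mem_posE_of_mem_boundaryIndices (hN k hk)
  obtain ⟨x, hx, hxN⟩ := Set.not_subset.1 fun h => hcone (hsub.antisymm h)
  simp only [coneOf, Set.mem_iInter] at hxN
  push Not at hxN
  obtain ⟨E₀, hE₀, hxE₀⟩ := hxN
  obtain ⟨i₀, hi₀, hi₀E₀⟩ : ∃ i₀ ∈ E, r i₀ ∉ posE r E₀ := by
    by_contra! h
    exact hxE₀ (posE_subset_of_forall_mem h hx)
  refine ⟨i₀, hi₀, fun k hk => ?_⟩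
  obtain ⟨i, hi, hki⟩ := mem_boundaryIndices.1 (hN k hk)
  refine posE_mono r (fun j hj => ?_) (hr.mem_posE_inter (hE.isFaceOf_erase hr hi) (hE₀ k hk) hki)
  obtain ⟨hjE₀, hj⟩ := Finset.mem_inter.1 hj
  exact Finset.mem_erase.2
    ⟨by rintro rfl; exact hi₀E₀ (mem_posE_self r hjE₀), Finset.mem_of_mem_erase hj⟩

end Boundary

section Relations

variable {n m t : ℕ}

lemma exists_relation_of_not_isFaceOf {v : Fin n → Fin m → ℚ} {S : Finset (Fin n)}
    (h : ¬ IsFaceOf (posQ v) (posE v S)) :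
    ∃ u : Fin n → ℚ, ∑ k, u k • v k = 0 ∧ (∀ k, 0 < u k → k ∈ S) ∧ ∃ k₀ ∉ S, u k₀ < 0 := by
  obtain ⟨β, hβ, ⟨α, -, hαS, hαβ⟩, k₀, hβk₀, hk₀⟩ : ∃ β : Fin n → ℚ, (∀ k, 0 ≤ β k) ∧
      ∑ k, β k • v k ∈ posE v S ∧ ∃ k₀, β k₀ ≠ 0 ∧ v k₀ ∉ posE v S := by
    by_contra! h'
    exact h (isFaceOf_posE_of_extreme S h')
  have hk₀S : k₀ ∉ S := fun hk => hk₀ (mem_posE_self v hk)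
  refine ⟨α - β, by simp [sub_smul, Finset.sum_sub_distrib, hαβ],
    fun k hk => by_contra fun hkS => ?_, k₀, hk₀S, ?_⟩
  · simp only [Pi.sub_apply, hαS k hkS] at hk
    linarith [hβ k]
  · simp only [Pi.sub_apply, hαS k₀ hk₀S, zero_sub, neg_neg_iff_pos]
    exact (hβ k₀).lt_of_ne' hβk₀

lemma exists_pos_multiple_mem_of_sum_smul_eq_zero {L : AddSubgroup (Fin n → ℤ)}
    {a : Fin n → Fin m → ℤ}
    (hA : ∀ u : Fin n → ℤ, ∑ i, u i • a i = 0 → u ∈ satSet L) {u : Fin n → ℚ}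
    (hu : ∑ k, u k • castQ a k = 0) : ∃ w ∈ L, ∃ D : ℚ, 0 < D ∧ ∀ k, (w k : ℚ) = D * u k := by
  obtain ⟨⟨b, hb⟩, hint⟩ := IsLocalization.exist_integer_multiples (nonZeroDivisors ℤ)
    Finset.univ u
  choose z hz using fun k => hint k (Finset.mem_univ k)
  simp only [algebraMap_int_eq, eq_intCast, zsmul_eq_mul] at hz
  have hb0 : (b : ℚ) ≠ 0 := Int.cast_ne_zero.2 (nonZeroDivisors.ne_zero hb)
  obtain ⟨d, hd, hdL⟩ := hA z <| by
    ext j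
    have hj := congrFun hu j
    simp only [Finset.sum_apply, Pi.smul_apply, smul_eq_mul, castQ, Pi.zero_apply] at hj ⊢
    have : ((∑ k, z k * a k j : ℤ) : ℚ) = b * ∑ k, u k * a k j := by
      push_cast
      rw [Finset.mul_sum]
      exact Finset.sum_congr rfl fun k _ => by rw [hz k]; ring
    rw [hj, mul_zero] at this
    exact_mod_cast this
  have hd0 : (d : ℚ) ≠ 0 := Int.cast_ne_zero.2 hd
  refine ⟨(d * b) • d • z, L.zsmul_mem hdL _, ((d : ℚ) * b) ^ 2,
    sq_pos_of_ne_zero (mul_ne_zero hd0 hb0), fun k => ?_⟩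
  simp [hz k]
  ring

end Relations

section Toric

open AddMonoidAlgebra

variable {n m : ℕ}

def degA (a : Fin n → Fin m → ℤ) (N : Fin n →₀ ℕ) : Fin m → ℤ := ∑ k, N k • a k

noncomputable def toricEvalOn (K : Type*) [CommSemiring K] (a : Fin n → Fin m → ℤ)
    (S : Finset (Fin n)) : MvPolynomial (Fin n) K →ₐ[K] AddMonoidAlgebra K (Fin m → ℤ) :=
  aeval fun k => if k ∈ S then single (a k) 1 else 0

variable {K : Type*}

section CommSemiring

variable [CommSemiring K] (a : Fin n → Fin m → ℤ) (S : Finset (Fin n))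

lemma toricEvalOn_monomial (N : Fin n →₀ ℕ) (c : K) :
    toricEvalOn K a S (monomial N c) =
      if ∀ k ∈ N.support, k ∈ S then single (degA a N) c else 0 := by
  rw [toricEvalOn, aeval_monomial, Finsupp.prod_fintype _ _ fun _ => pow_zero _]
  split_ifs with h
  · have hpow : ∀ k,
        (if k ∈ S then single (a k) (1 : K) else 0) ^ N k = single (N k • a k) 1 := by
      intro k
      by_cases hk : k ∈ S
      · simp [hk, single_pow]
      · have : N k = 0 := by_contra fun h' => hk (h k (Finsupp.mem_support_iff.2 h'))
        simp [hk, this, AddMonoidAlgebra.one_def]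
    rw [Finset.prod_congr rfl fun k _ => hpow k, prod_single, coe_algebraMap,
      Function.comp_apply, single_mul_single, zero_add, Finset.prod_const_one, mul_one]
    rfl
  · push Not at h
    obtain ⟨k, hk, hkS⟩ := h
    rw [Finset.prod_eq_zero (Finset.mem_univ k)
      (by simp [hkS, zero_pow (Finsupp.mem_support_iff.1 hk)]), mul_zero]

lemma coeff_toricEvalOn (G : MvPolynomial (Fin n) K) (β : Fin m → ℤ) :
    (toricEvalOn K a S G).coeff β =
      ∑ N ∈ G.support, if (∀ k ∈ N.support, k ∈ S) ∧ degA a N = β then G.coeff N else 0 := by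
  conv_lhs => rw [G.as_sum, map_sum]
  rw [AddMonoidAlgebra.coeff_sum, Finsupp.finsetSum_apply]
  refine Finset.sum_congr rfl fun N _ => ?_
  rw [toricEvalOn_monomial]
  by_cases h : ∀ k ∈ N.support, k ∈ S
  · rw [if_pos h, coeff_single, Finsupp.single_apply]
    exact if_congr (and_iff_right h).symm rfl rfl
  · simp only [h, false_and, if_false]
    rfl

lemma posPart_apply (u : Fin n → ℤ) (k : Fin n) : _root_.posPart u k = (u k).toNat := rfl

lemma degA_posPart {u : Fin n → ℤ} (hu : ∑ k, u k • a k = 0) :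
    degA a (_root_.posPart u) = degA a (_root_.posPart (-u)) := by
  rw [← sub_eq_zero, ← hu, degA, degA, ← Finset.sum_sub_distrib]
  refine Finset.sum_congr rfl fun k _ => ?_
  rw [posPart_apply, posPart_apply, ← natCast_zsmul, ← natCast_zsmul, ← sub_smul, Pi.neg_apply,
    Int.toNat_sub_toNat_neg]

end CommSemiring

section CommRing

variable [CommRing K] (a : Fin n → Fin m → ℤ)

lemma binomial_mem_latticeIdeal {L : AddSubgroup (Fin n → ℤ)} {w : Fin n → ℤ} (hw : w ∈ L) :
    monomial (_root_.posPart w) (1 : K) - monomial (_root_.posPart (-w)) 1 ∈ latticeIdeal K L :=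
  Ideal.subset_span ⟨w, hw, rfl⟩

lemma toricEvalOn_binomial {S : Finset (Fin n)} {w : Fin n → ℤ} (hS : ∀ k, 0 < w k → k ∈ S)
    {k₀ : Fin n} (hk₀ : k₀ ∉ S) (hw : w k₀ < 0) :
    toricEvalOn K a S (monomial (_root_.posPart w) (1 : K) - monomial (_root_.posPart (-w)) 1) =
      single (degA a (_root_.posPart w)) 1 := by
  have hpos : ∀ k ∈ (_root_.posPart w).support, k ∈ S := fun k hk =>
    hS k (by simpa [posPart_apply] using hk)
  have hneg : ¬ ∀ k ∈ (_root_.posPart (-w)).support, k ∈ S := fun h =>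
    hk₀ (h k₀ (by simpa [posPart_apply] using hw))
  rw [map_sub, toricEvalOn_monomial, toricEvalOn_monomial, if_pos hpos, if_neg hneg, sub_zero]

lemma latticeIdeal_le_ker {L : AddSubgroup (Fin n → ℤ)} (hL : ∀ u ∈ L, ∑ k, u k • a k = 0) :
    latticeIdeal K L ≤ RingHom.ker (toricEvalOn K a Finset.univ) := by
  rw [latticeIdeal, Ideal.span_le]
  rintro _ ⟨u, hu, rfl⟩
  simp [toricEvalOn_monomial, degA_posPart a (hL u hu)]

lemma toricEvalOn_eq_zero {S : Finset (Fin n)} {G : MvPolynomial (Fin n) K}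
    (hG : toricEvalOn K a Finset.univ G = 0)
    (hS : ∀ N₀ ∈ G.support, ∀ N ∈ G.support, (∀ k ∈ N₀.support, k ∈ S) →
      degA a N = degA a N₀ → ∀ k ∈ N.support, k ∈ S) :
    toricEvalOn K a S G = 0 := by
  ext β
  rw [coeff_toricEvalOn, AddMonoidAlgebra.coeff_zero, Finsupp.zero_apply]
  by_cases h : ∃ N₀ ∈ G.support, (∀ k ∈ N₀.support, k ∈ S) ∧ degA a N₀ = β
  · -- then every monomial of degree `β` is supported in `S`: the coefficient is that of `hG`
    obtain ⟨N₀, hN₀, hN₀S, rfl⟩ := h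
    have h0 := congrArg (fun f => f.coeff (degA a N₀)) hG
    simp only [coeff_toricEvalOn, Finset.mem_univ, implies_true, true_and,
      AddMonoidAlgebra.coeff_zero, Finsupp.zero_apply] at h0
    refine Eq.trans (Finset.sum_congr rfl fun N hN => ?_) h0
    exact if_congr ⟨And.right, fun hdeg => ⟨hS N₀ hN₀ N hN hN₀S hdeg, hdeg⟩⟩ rfl rfl
  · push Not at h
    exact Finset.sum_eq_zero fun N hN => if_neg fun hN' => h N hN hN'.1 hN'.2

end CommRing

end Toric

section Monomials

variable {n m t : ℕ} {a : Fin n → Fin m → ℤ}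

lemma IsFaceOf.forall_mem_of_degA_eq {Φ : Set (Fin m → ℚ)} (hΦ : IsFaceOf (posQ (castQ a)) Φ)
    {N₀ N : Fin n →₀ ℕ} (hN₀ : ∀ k ∈ N₀.support, castQ a k ∈ Φ) (hdeg : degA a N = degA a N₀) :
    ∀ k ∈ N.support, castQ a k ∈ Φ := by
  have hmem : ∀ N : Fin n →₀ ℕ,
      (fun j => (degA a N j : ℚ)) ∈ Φ ↔ ∀ k ∈ N.support, castQ a k ∈ Φ := by
    intro N
    have hcast : (fun j => (degA a N j : ℚ)) = ∑ k, (N k : ℚ) • castQ a k := by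
      ext j
      simp [degA, castQ, Finset.sum_apply]
    rw [hcast, hΦ.sum_smul_mem_iff fun k => Nat.cast_nonneg _]
    simp [Finsupp.mem_support_iff]
  exact (hmem N).1 (hdeg ▸ (hmem N₀).2 hN₀)

lemma IsMinimalNonFace.forall_mem_boundaryIndices_of_degA_eq {r : Fin t → Fin m → ℚ}
    {E : Finset (Fin t)} (hE : IsMinimalNonFace (posQ (castQ a)) r E)
    (hr : IsExtremeRayGens (posQ (castQ a)) r) {N₀ N : Fin n →₀ ℕ}
    (hN₀ : ∀ k ∈ N₀.support, k ∈ boundaryIndices (castQ a) r E)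
    (hcone : coneOf (castQ a) r N₀ ≠ posE r E) (hdeg : degA a N = degA a N₀) :
    ∀ k ∈ N.support, k ∈ boundaryIndices (castQ a) r E := by
  obtain ⟨i₀, hi₀, hN₀i₀⟩ := hE.exists_forall_mem_posE_erase hr hN₀ hcone
  exact fun k hk => mem_boundaryIndices.2
    ⟨i₀, hi₀, (hE.isFaceOf_erase hr hi₀).forall_mem_of_degA_eq hN₀i₀ hdeg k hk⟩

lemma exists_mem_of_not_isFaceOf {L : AddSubgroup (Fin n → ℤ)}
    (hA : ∀ u : Fin n → ℤ, ∑ i, u i • a i = 0 → u ∈ satSet L) {S : Finset (Fin n)}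
    (h : ¬ IsFaceOf (posQ (castQ a)) (posE (castQ a) S)) :
    ∃ w ∈ L, (∀ k, 0 < w k → k ∈ S) ∧ ∃ k₀ ∉ S, w k₀ < 0 := by
  obtain ⟨u, hu, huS, k₀, hk₀, hu₀⟩ := exists_relation_of_not_isFaceOf h
  obtain ⟨w, hwL, D, hD, hw⟩ := exists_pos_multiple_mem_of_sum_smul_eq_zero hA hu
  refine ⟨w, hwL, fun k hk => huS k (pos_of_mul_pos_right ?_ hD.le), k₀, hk₀, ?_⟩
  · exact hw k ▸ Int.cast_pos.2 hk
  · exact Int.cast_lt_zero.1 (hw k₀ ▸ mul_neg_of_pos_of_neg hD hu₀)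

end Monomials

theorem stmt14_general {K : Type*} [Field K] {n m t f s : ℕ}
    (L : AddSubgroup (Fin n → ℤ))
    (a : Fin n → Fin m → ℤ)
    (hA : ∀ u : Fin n → ℤ, u ∈ satSet L ↔ ∑ i, u i • a i = 0)
    (rvec : Fin t → Fin m → ℤ)
    (hr0 : ∀ i, castQ rvec i ≠ 0)
    (hray : ∀ i, IsFaceOf (posQ (castQ a)) (rayOf (castQ rvec i)))
    (hrinj : ∀ i j : Fin t, rayOf (castQ rvec i) = rayOf (castQ rvec j) → i = j)
    (hspan : posQ (castQ a) = posQ (castQ rvec))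
    (𝔼 : Fin f → Finset (Fin t))
    (hE1 : ∀ j : Fin f, ¬ IsFaceOf (posQ (castQ a)) (posE (castQ rvec) (𝔼 j)))
    (hE2 : ∀ (j : Fin f) (E : Finset (Fin t)),
      ¬ IsFaceOf (posQ (castQ a)) (posE (castQ rvec) E) →
      posE (castQ rvec) E ⊆ posE (castQ rvec) (𝔼 j) →
      posE (castQ rvec) E = posE (castQ rvec) (𝔼 j))
    (F : Fin s → MvPolynomial (Fin n) K)
    (hrad : (latticeIdeal K L).radical = (Ideal.span (Set.range F)).radical) :
    ∀ j : Fin f, ∃ i : Fin s, ∃ u ∈ (F i).support,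
      coneOf (castQ a) (castQ rvec) u = posE (castQ rvec) (𝔼 j) := by
  intro j
  by_contra! hcone
  have hr : IsExtremeRayGens (posQ (castQ a)) (castQ rvec) := ⟨hr0, hray, hrinj, hspan⟩
  have hE : IsMinimalNonFace (posQ (castQ a)) (castQ rvec) (𝔼 j) := ⟨hE1 j, hE2 j⟩
  set S := boundaryIndices (castQ a) (castQ rvec) (𝔼 j)
  have hker : (latticeIdeal K L).radical ≤ RingHom.ker (toricEvalOn K a Finset.univ) :=
    (RingHom.ker_isPrime _).radical_le_iff.2 <|
      latticeIdeal_le_ker a fun u hu => (hA u).1 ⟨1, one_ne_zero, by simpa using hu⟩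
  have hkerS : (latticeIdeal K L).radical ≤ RingHom.ker (toricEvalOn K a S) := by
    rw [hrad, (RingHom.ker_isPrime _).radical_le_iff, Ideal.span_le]
    rintro _ ⟨i, rfl⟩
    exact toricEvalOn_eq_zero a (hker (hrad ▸ Ideal.le_radical (Ideal.subset_span ⟨i, rfl⟩)))
      fun N₀ hN₀ N _ hN₀S hdeg =>
        hE.forall_mem_boundaryIndices_of_degA_eq hr hN₀S (hcone i N₀ hN₀) hdeg
  obtain ⟨w, hwL, hwS, k₀, hk₀, hw₀⟩ := exists_mem_of_not_isFaceOf (fun u hu => (hA u).2 hu)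
    (hE.posE_eq_posE_boundaryIndices hr ▸ hE.not_isFaceOf)
  have hB := hkerS (Ideal.le_radical (binomial_mem_latticeIdeal hwL))
  rw [RingHom.mem_ker, toricEvalOn_binomial a hwS hk₀ hw₀] at hB
  exact one_ne_zero (AddMonoidAlgebra.single_eq_zero.1 hB)

/-- if `F₁,…,Fₛ` generate `rad(I_L)` up to radical, then
`⋃ᵢ D_{L'}^L(Fᵢ)` is a spanning subcomplex of `D_{L'}^L`: every vertex `𝔼ⱼ` is a vertex
of some `D_{L'}^L(Fᵢ)`, i.e. some monomial of some `Fᵢ` has cone `σ(𝔼ⱼ)`. -/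
theorem stmt14 {K : Type*} [Field K] {n m t f r' s : ℕ}
    (L L' : AddSubgroup (Fin n → ℤ))
    (hLpos : ∀ u ∈ L, (∀ i, 0 ≤ u i) → u = (0 : Fin n → ℤ))
    (hLL' : L ≤ L')
    (a : Fin n → Fin m → ℤ)
    (hA : ∀ u : Fin n → ℤ, u ∈ satSet L ↔ ∑ i, u i • a i = 0)
    (b : Fin n → Fin r' → ℤ)
    (hB : ∀ u : Fin n → ℤ, u ∈ satSet L' ↔ ∑ i, u i • b i = 0)
    (rvec : Fin t → Fin m → ℤ)
    (hr0 : ∀ i, castQ rvec i ≠ 0)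
    (hray : ∀ i, IsFaceOf (posQ (castQ a)) (rayOf (castQ rvec i)))
    (hrinj : ∀ i j : Fin t, rayOf (castQ rvec i) = rayOf (castQ rvec j) → i = j)
    (hspan : posQ (castQ a) = posQ (castQ rvec))
    (𝔼 : Fin f → Finset (Fin t))
    (hE1 : ∀ j : Fin f, ¬ IsFaceOf (posQ (castQ a)) (posE (castQ rvec) (𝔼 j)))
    (hE2 : ∀ (j : Fin f) (E : Finset (Fin t)),
      ¬ IsFaceOf (posQ (castQ a)) (posE (castQ rvec) E) →
      posE (castQ rvec) E ⊆ posE (castQ rvec) (𝔼 j) →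
      posE (castQ rvec) E = posE (castQ rvec) (𝔼 j))
    (hE3 : ∀ E : Finset (Fin t), ¬ IsFaceOf (posQ (castQ a)) (posE (castQ rvec) E) →
      ∃ j : Fin f, posE (castQ rvec) (𝔼 j) ⊆ posE (castQ rvec) E)
    (hEinj : ∀ j k : Fin f, posE (castQ rvec) (𝔼 j) = posE (castQ rvec) (𝔼 k) → j = k)
    (π : (Fin m → ℚ) →ₗ[ℚ] (Fin r' → ℚ))
    (hπ : ∀ i, π (castQ a i) = castQ b i)
    (F : Fin s → MvPolynomial (Fin n) K)
    (hrad : (latticeIdeal K L).radical = (Ideal.span (Set.range F)).radical) :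
    ∀ j : Fin f, ∃ i : Fin s, ∃ u ∈ (F i).support,
      coneOf (castQ a) (castQ rvec) u = posE (castQ rvec) (𝔼 j) :=
  stmt14_general L a hA rvec hr0 hray hrinj hspan 𝔼 hE1 hE2 F hrad
end
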